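/- arXiv:2411.05733 — 2 statements merged into one kernel-verified Lean document; each statement's English description precedes it below -/
import Mathlib

section
/- If a bagging classifier satisfies differential privacy with parameters ε = m·k·ln((n+1)/n) and δ = 1 - ((n-1)/n)^{m·k} for subsample count m·k, and we require δ = n^{-c} for some c > 1, then ε ≤ ln(1 + 1/n) ≤ 1/n. -/
open Real

/-- Bagging with non-private learners: requiring `δ = n^{-c}` forces
`ε = m·k·(log(n+1) − log n) ≤ log(1 + 1/n) ≤ 1/n`. -/
theorem bagging_epsilon_small (n : ℕ) (hn : 1 < n) (c : ℝ) (hc : 1 < c)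
    (mk ε : ℝ)
    (hmk : mk = Real.log (1 - (n : ℝ) ^ (-c)) /
      (Real.log ((n : ℝ) - 1) - Real.log (n : ℝ)))
    (hε : ε = mk * (Real.log ((n : ℝ) + 1) - Real.log (n : ℝ))) :
    ε ≤ Real.log (1 + 1 / (n : ℝ)) ∧ Real.log (1 + 1 / (n : ℝ)) ≤ 1 / (n : ℝ) := by
  have hn2 : (2:ℝ) ≤ (n:ℝ) := by exact_mod_cast hn
  have hnpos : (0:ℝ) < (n:ℝ) := by linarith
  have hrc : (n:ℝ) ^ (-c) ≤ (n:ℝ) ^ (-1 : ℝ) :=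
    Real.rpow_le_rpow_of_exponent_le (by linarith) (by linarith)
  have hrinv : (n:ℝ) ^ (-1 : ℝ) = 1 / (n:ℝ) := by
    rw [Real.rpow_neg_one]; ring
  have hclt : (n:ℝ) ^ (-c) ≤ 1 / n := hrinv ▸ hrc
  have hinvlt : 1 / (n:ℝ) < 1 := by
    rw [div_lt_one hnpos]; linarith
  have hpos1 : 0 < 1 - (n:ℝ) ^ (-c) := by linarith
  have hcpos : 0 < (n:ℝ) ^ (-c) := Real.rpow_pos_of_pos hnpos _
  have hN : Real.log (1 - (n:ℝ) ^ (-c)) ≤ 0 :=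
    Real.log_nonpos (by linarith) (by linarith)
  have hn1pos : 0 < (n:ℝ) - 1 := by linarith
  have hD : Real.log ((n:ℝ) - 1) - Real.log (n:ℝ) < 0 := by
    have := Real.log_lt_log hn1pos (by linarith : (n:ℝ) - 1 < n)
    linarith
  have hdiveq : Real.log ((n:ℝ) - 1) - Real.log (n:ℝ)
      = Real.log (1 - 1 / (n:ℝ)) := by
    rw [← Real.log_div (by linarith) (by linarith)]
    congr 1
    field_simp
  have hND : Real.log ((n:ℝ) - 1) - Real.log (n:ℝ) ≤ Real.log (1 - (n:ℝ) ^ (-c)) := by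
    rw [hdiveq]
    exact Real.log_le_log (by linarith) (by linarith)
  have hmk1 : mk ≤ 1 := by
    rw [hmk, div_le_one_iff]
    right; right; exact ⟨hD, hND⟩
  have hLeq : Real.log ((n:ℝ) + 1) - Real.log (n:ℝ) = Real.log (1 + 1 / (n:ℝ)) := by
    rw [← Real.log_div (by linarith) (by linarith)]
    congr 1
    field_simp
  have hL0 : 0 ≤ Real.log (1 + 1 / (n:ℝ)) := by
    apply Real.log_nonneg
    have : 0 < 1 / (n:ℝ) := by positivity
    linarith
  constructor
  · rw [hε, hLeq]
    exact mul_le_of_le_one_left hL0 hmk1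
  · have := Real.log_le_sub_one_of_pos (x := 1 + 1 / (n:ℝ)) (by positivity)
    linarith
end

section
/- Let M be an ε-differentially private mechanism and T a (randomized) data-augmentation preprocessing map such that for neighboring inputs D, D', the symmetric difference Y = |T(D) ⊕ T(D')| (under coupled randomness) is a random variable bounded by N_ℓ and satisfying a Chernoff tail bound Pr[Y ≥ (1+γ)N_ℓ/k] ≤ exp(-(γ²/(2+γ))·N_ℓ/k). Then for any measurable set S, Pr[M(T(D)) ∈ S] ≤ exp(ε(1+γ)N_ℓ/k)·Pr[M(T(D')) ∈ S] + exp(ε·N_ℓ - (γ²/(2+γ))·N_ℓ/k). -/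
/-!
Split the coupled randomness `θ` according to whether the number `Y` of differing entries
is below the Chernoff threshold `(1 + γ) N_ℓ / k`. Below it, group privacy gives the factor
`e^{ε (1 + γ) N_ℓ / k}`; above it, group privacy with `Y ≤ N_ℓ` only bounds the output
probability by `e^{ε N_ℓ}`, and that event has probability at most `e^{-(γ²/(2+γ)) N_ℓ/k}`.
Integrating the pointwise bound over `θ` gives the claim.
-/

open MeasureTheory

def GroupPrivate {α Ω : Type*} [DecidableEq α] [MeasurableSpace Ω] {m : ℕ} (ε : ℝ)
    (M : (Fin m → α) → Measure Ω) : Prop :=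
  ∀ a a' : Fin m → α, ∀ j : ℕ, hammingDist a a' ≤ j →
    ∀ s : Set Ω, MeasurableSet s → M a s ≤ ENNReal.ofReal (Real.exp (ε * j)) * M a' s

namespace GroupPrivate

variable {α Ω : Type*} [DecidableEq α] [MeasurableSpace Ω] {m : ℕ}
  {M : (Fin m → α) → Measure Ω} {ε : ℝ}

theorem measure_le_ofReal_exp_mul (hM : GroupPrivate ε M) (hε : 0 ≤ ε)
    {a a' : Fin m → α} {t : ℝ} (ht : (hammingDist a a' : ℝ) ≤ t)
    {s : Set Ω} (hs : MeasurableSet s) :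
    M a s ≤ ENNReal.ofReal (Real.exp (ε * t)) * M a' s := by
  refine (hM a a' _ le_rfl s hs).trans (mul_le_mul_left ?_ _)
  gcongr

theorem measure_le_ofReal_exp [∀ a, IsProbabilityMeasure (M a)] (hM : GroupPrivate ε M)
    (hε : 0 ≤ ε) {a a' : Fin m → α} {t : ℝ} (ht : (hammingDist a a' : ℝ) ≤ t)
    {s : Set Ω} (hs : MeasurableSet s) :
    M a s ≤ ENNReal.ofReal (Real.exp (ε * t)) :=
  (hM.measure_le_ofReal_exp_mul hε ht hs).trans (mul_le_of_le_one_right' prob_le_one)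

end GroupPrivate

theorem MeasureTheory.Measure.bind_apply_le_mul_add_mul_measure {Θ Ω : Type*}
    [MeasurableSpace Θ] [MeasurableSpace Ω] (P : Measure Θ) {κ κ' : Θ → Measure Ω} (hκ : Measurable κ)
    (hκ' : Measurable κ') {s : Set Ω} (hs : MeasurableSet s) (B : Set Θ) {c d : ENNReal}
    (hgood : ∀ θ ∉ B, κ θ s ≤ c * κ' θ s) (hbad : ∀ θ ∈ B, κ θ s ≤ d) :
    P.bind κ s ≤ c * P.bind κ' s + d * P B := by
  have hpointwise : ∀ θ, κ θ s ≤ c * κ' θ s + B.indicator (fun _ => d) θ := by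
    intro θ
    by_cases hθ : θ ∈ B
    · simpa [hθ] using le_add_left (hbad θ hθ)
    · simpa [hθ] using hgood θ hθ
  have hκ's : Measurable fun θ => κ' θ s := (Measure.measurable_coe hs).comp hκ'
  rw [Measure.bind_apply hs hκ.aemeasurable, Measure.bind_apply hs hκ'.aemeasurable,
    ← lintegral_const_mul c hκ's]
  calc ∫⁻ θ, κ θ s ∂P ≤ ∫⁻ θ, c * κ' θ s + B.indicator (fun _ => d) θ ∂P :=
        lintegral_mono hpointwise
    _ = ∫⁻ θ, c * κ' θ s ∂P + ∫⁻ θ, B.indicator (fun _ => d) θ ∂P :=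
        lintegral_add_left (hκ's.const_mul c) _
    _ ≤ ∫⁻ θ, c * κ' θ s ∂P + d * P B := by gcongr; exact lintegral_indicator_const_le B d

theorem smote_composition_general {α Ω Θ : Type*} [DecidableEq α] [MeasurableSpace Ω]
    [MeasurableSpace Θ] {m : ℕ}
    (M : (Fin m → α) → Measure Ω) [∀ a, IsProbabilityMeasure (M a)]
    (P : Measure Θ)
    (ε γ Nl k : ℝ) (hε : 0 ≤ ε)
    (hGroup : ∀ a a' : Fin m → α, ∀ j : ℕ,
      (Finset.univ.filter fun i => a i ≠ a' i).card ≤ j →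
      ∀ s : Set Ω, MeasurableSet s →
        M a s ≤ ENNReal.ofReal (Real.exp (ε * j)) * M a' s)
    -- `TD θ` and `TD' θ` are the coupled outputs of the preprocessing on `D` and `D'`
    (TD TD' : Θ → Fin m → α)
    (hMeas : Measurable fun θ => M (TD θ)) (hMeas' : Measurable fun θ => M (TD' θ))
    -- `Y ≤ N_ℓ` almost surely (here: surely)
    (hYbound : ∀ θ : Θ,
      (((Finset.univ.filter fun i => TD θ i ≠ TD' θ i).card : ℝ)) ≤ Nl)
    -- the Chernoff tail bound on `Y`
    (hChernoff : P {θ | (1 + γ) * Nl / k ≤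
        ((Finset.univ.filter fun i => TD θ i ≠ TD' θ i).card : ℝ)} ≤
      ENNReal.ofReal (Real.exp (-(γ ^ 2 / (2 + γ)) * Nl / k)))
    (s : Set Ω) (hs : MeasurableSet s) :
    (P.bind fun θ => M (TD θ)) s ≤
      ENNReal.ofReal (Real.exp (ε * (1 + γ) * Nl / k)) * (P.bind fun θ => M (TD' θ)) s +
        ENNReal.ofReal (Real.exp (ε * Nl - γ ^ 2 / (2 + γ) * Nl / k)) := by
  have hM : GroupPrivate ε M := hGroup
  set B := {θ | (1 + γ) * Nl / k ≤ (hammingDist (TD θ) (TD' θ) : ℝ)}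
  have hgood : ∀ θ ∉ B,
      M (TD θ) s ≤ ENNReal.ofReal (Real.exp (ε * (1 + γ) * Nl / k)) * M (TD' θ) s := by
    intro θ hθ
    rw [mul_assoc, mul_div_assoc]
    exact hM.measure_le_ofReal_exp_mul hε (not_le.mp hθ).le hs
  have hbad : ∀ θ ∈ B, M (TD θ) s ≤ ENNReal.ofReal (Real.exp (ε * Nl)) := fun θ _ =>
    hM.measure_le_ofReal_exp hε (hYbound θ) hs
  calc (P.bind fun θ => M (TD θ)) s
      ≤ ENNReal.ofReal (Real.exp (ε * (1 + γ) * Nl / k)) * (P.bind fun θ => M (TD' θ)) s +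
          ENNReal.ofReal (Real.exp (ε * Nl)) * P B :=
        P.bind_apply_le_mul_add_mul_measure hMeas hMeas' hs B hgood hbad
    _ ≤ ENNReal.ofReal (Real.exp (ε * (1 + γ) * Nl / k)) * (P.bind fun θ => M (TD' θ)) s +
          ENNReal.ofReal (Real.exp (ε * Nl)) *
            ENNReal.ofReal (Real.exp (-(γ ^ 2 / (2 + γ)) * Nl / k)) := by
        gcongr
        exact hChernoff
    _ = _ := by
        rw [← ENNReal.ofReal_mul (Real.exp_nonneg _), ← Real.exp_add]
        ring_nf

/-- Composing an `ε`-DP mechanism `M` (with group privacy) with a randomized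
preprocessing map whose coupled symmetric difference `Y` is bounded by `N_ℓ` and
satisfies a Chernoff tail bound yields
`Pr[M(T(D)) ∈ S] ≤ e^{ε(1+γ)N_ℓ/k} Pr[M(T(D')) ∈ S] + e^{ε N_ℓ − (γ²/(2+γ)) N_ℓ/k}`. -/
theorem smote_composition {α Ω Θ : Type*} [DecidableEq α] [MeasurableSpace Ω]
    [MeasurableSpace Θ] {m : ℕ}
    (M : (Fin m → α) → Measure Ω) [∀ a, IsProbabilityMeasure (M a)]
    (P : Measure Θ) [IsProbabilityMeasure P]
    (ε γ Nl k : ℝ) (hε : 0 ≤ ε) (hγ : 0 ≤ γ) (hNl : 0 < Nl) (hk : 1 ≤ k)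
    (hGroup : ∀ a a' : Fin m → α, ∀ j : ℕ,
      (Finset.univ.filter fun i => a i ≠ a' i).card ≤ j →
      ∀ s : Set Ω, MeasurableSet s →
        M a s ≤ ENNReal.ofReal (Real.exp (ε * j)) * M a' s)
    -- `TD θ` and `TD' θ` are the coupled outputs of the preprocessing on `D` and `D'`
    (TD TD' : Θ → Fin m → α)
    (hMeas : Measurable fun θ => M (TD θ)) (hMeas' : Measurable fun θ => M (TD' θ))
    -- `Y ≤ N_ℓ` almost surely (here: surely)
    (hYbound : ∀ θ : Θ,
      (((Finset.univ.filter fun i => TD θ i ≠ TD' θ i).card : ℝ)) ≤ Nl)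
    -- the Chernoff tail bound on `Y`
    (hChernoff : P {θ | (1 + γ) * Nl / k ≤
        ((Finset.univ.filter fun i => TD θ i ≠ TD' θ i).card : ℝ)} ≤
      ENNReal.ofReal (Real.exp (-(γ ^ 2 / (2 + γ)) * Nl / k)))
    (s : Set Ω) (hs : MeasurableSet s) :
    (P.bind fun θ => M (TD θ)) s ≤
      ENNReal.ofReal (Real.exp (ε * (1 + γ) * Nl / k)) * (P.bind fun θ => M (TD' θ)) s +
        ENNReal.ofReal (Real.exp (ε * Nl - γ ^ 2 / (2 + γ) * Nl / k)) :=
  smote_composition_general M P ε γ Nl k hε hGroup TD TD' hMeas hMeas' hYbound hChernoff s hs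
end
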